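/- arXiv:0802.1279 — 2 statements merged into one kernel-verified Lean document; each statement's English description precedes it below -/
import Mathlib

section
/- Let m = x_1^{a_1}···x_n^{a_n} and m' = x_1^{b_1}···x_n^{b_n} be two monomials of the same degree d ≥ 1. If m ≤_lex m', then m/x_{max(m)} ≤_lex m'/x_{max(m')}. -/
open MvPolynomial

/-- Exponent vectors of monomials in `n` variables; index `i` corresponds to the variable
`x_{i+1}`, so that the `toLex` order on exponent vectors is the lexicographic order on
monomials with `x_1 > x_2 > ⋯ > x_n`. -/
abbrev Mon (n : ℕ) := Fin n →₀ ℕ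

/-- The degree of a monomial. -/
def monDeg {n : ℕ} (m : Mon n) : ℕ := ∑ i, m i

/-- The lexsegment `L(u,v)`: monomials of degree `d` with `u ≥_lex w ≥_lex v`. -/
def lexSeg {n : ℕ} (d : ℕ) (u v : Mon n) : Set (Mon n) :=
  {w | monDeg w = d ∧ toLex v ≤ toLex w ∧ toLex w ≤ toLex u}

/-- The monomial ideal generated by a set of monomials. -/
noncomputable def monomialIdeal {n : ℕ} (k : Type*) [Field k] (T : Set (Mon n)) :
    Ideal (MvPolynomial (Fin n) k) :=
  Ideal.span ((fun m => (monomial m (1 : k) : MvPolynomial (Fin n) k)) '' T)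

/-- The order `≺` on monomials of a fixed degree: `w ≺ w'` iff `ν₁(w) < ν₁(w')`, or
`ν₁(w) = ν₁(w')` and `w >_lex w'`. -/
def prec {n : ℕ} [NeZero n] (z w : Mon n) : Prop :=
  z 0 < w 0 ∨ (z 0 = w 0 ∧ toLex w < toLex z)

/-- A set `T` of monomials, totally ordered by a relation `r`, generates an ideal with linear
quotients with respect to `r` if for every `w ∈ T` the colon ideal of the ideal generated by
the earlier monomials `{z ∈ T | r z w}` by `w` is generated by a subset of the variables. -/
noncomputable def hasLinearQuotientsWrt {n : ℕ} (k : Type*) [Field k] (T : Set (Mon n))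
    (r : Mon n → Mon n → Prop) : Prop :=
  ∀ w ∈ T, ∃ V : Set (Fin n),
    Submodule.colon (monomialIdeal k {z ∈ T | r z w})
        (Ideal.span {(monomial w (1 : k) : MvPolynomial (Fin n) k)}) =
      Ideal.span ((fun i => (X i : MvPolynomial (Fin n) k)) '' V)

/-- `max(m)`: the largest index of a variable dividing the monomial `m`. -/
def maxVar {n : ℕ} [NeZero n] (m : Mon n) : Fin n := WithBot.unbotD 0 m.support.max

/-- The shadow of a set of monomials. -/
def shad {n : ℕ} (T : Set (Mon n)) : Set (Mon n) :=
  {m | ∃ t ∈ T, ∃ i : Fin n, m = t + Finsupp.single i 1}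

/-- A set of monomials is a lexsegment if it is of the form `L(u,v)`. -/
def IsLexSegSet {n : ℕ} (T : Set (Mon n)) : Prop :=
  ∃ (e : ℕ) (u v : Mon n), monDeg u = e ∧ monDeg v = e ∧ toLex v ≤ toLex u ∧ T = lexSeg e u v

/-- A lexsegment is a completely lexsegment if all its iterated shadows are lexsegments. -/
def IsCompletelyLexSeg {n : ℕ} (T : Set (Mon n)) : Prop :=
  ∀ j : ℕ, IsLexSegSet (shad^[j] T)

/-- `set(w)` for `w ∈ L(u,v)`: the set of `s` with `x_s · w ∈ I_{≺ w}`, where `I_{≺ w}` is the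
ideal generated by `{z ∈ L(u,v) | z ≺ w}`. -/
noncomputable def setW {n : ℕ} [NeZero n] (k : Type*) [Field k] (d : ℕ) (u v : Mon n)
    (w : Mon n) : Set (Fin n) :=
  {s | (monomial (w + Finsupp.single s 1) (1 : k) : MvPolynomial (Fin n) k) ∈
    monomialIdeal k {z ∈ lexSeg d u v | prec z w}}

/-- `g` is the value of the decomposition function of `I = (L(u,v))` at the monomial `m`:
`g` is the `≺`-smallest `w' ∈ L(u,v)` such that `m ∈ I_{⪯ w'}`. -/
noncomputable def isDecompOf {n : ℕ} [NeZero n] (k : Type*) [Field k] (d : ℕ) (u v : Mon n)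
    (m : Mon n) (g : Mon n) : Prop :=
  g ∈ lexSeg d u v ∧
  (monomial m (1 : k) : MvPolynomial (Fin n) k) ∈
      monomialIdeal k {z ∈ lexSeg d u v | prec z g ∨ z = g} ∧
  ∀ w' ∈ lexSeg d u v,
    (monomial m (1 : k) : MvPolynomial (Fin n) k) ∈
        monomialIdeal k {z ∈ lexSeg d u v | prec z w' ∨ z = w'} →
      g = w' ∨ prec g w'

/-- Reversing the variables: the `toLex` order on `revMon` exponent vectors is the
lexicographic order induced by `x_n > x_{n-1} > ⋯ > x_1`. -/
def revMon {n : ℕ} (m : Mon n) : Mon n := Finsupp.equivMapDomain Fin.revPerm m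

/-- The depth of `S/I` with respect to the graded maximal ideal `(x_1, …, x_n)`:
the maximal length of an `S/I`-regular sequence of elements of `(x_1, …, x_n)`. -/
noncomputable def ringDepth {n : ℕ} {k : Type*} [Field k]
    (I : Ideal (MvPolynomial (Fin n) k)) : ℕ :=
  sSup {r : ℕ | ∃ rs : List (MvPolynomial (Fin n) k), rs.length = r ∧
    (∀ x ∈ rs, x ∈ Ideal.span (Set.range (X : Fin n → MvPolynomial (Fin n) k))) ∧
    RingTheory.Sequence.IsRegular (MvPolynomial (Fin n) k ⧸ I) rs}

/-! Let `i` be the first index where `m` and `m'` differ, so `m i < m' i`. As the degrees agree,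
`m` has a variable beyond `x_i`, so dividing `m` by `x_{max(m)}` leaves the entries up to `i`
untouched, while dividing `m'` by `x_{max(m')}` lowers the entry at `i` by at most one, and only
if `max(m') = i`. So the quotients still compare strictly at `i`, except when `max(m') = i` and
`m' i = m i + 1`: then `m' / x_i` vanishes beyond `i` and lies below `m / x_{max(m)}`
coordinatewise, and having the same degree the two quotients are equal. -/

namespace Finsupp

variable {σ : Type*}

lemma degree_strictMono : StrictMono (degree : (σ →₀ ℕ) → ℕ) := fun f g h => by
  obtain ⟨e, rfl⟩ := le_iff_exists_add.mp h.le
  have he : e.degree ≠ 0 := (degree_eq_zero_iff e).not.mpr (by rintro rfl; simp at h)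
  rw [map_add]
  omega

lemma eq_of_le_of_degree_eq {f g : σ →₀ ℕ} (h : f ≤ g) (hdeg : f.degree = g.degree) : f = g :=
  by_contra fun hne => (degree_strictMono (h.lt_of_ne hne)).ne hdeg

lemma degree_tsub_single_add_one {f : σ →₀ ℕ} {i : σ} (hi : f i ≠ 0) :
    (f - single i 1).degree + 1 = f.degree := by
  conv_rhs => rw [← tsub_add_cancel_of_le (single_le_iff.mpr (Nat.one_le_iff_ne_zero.mpr hi))]
  rw [map_add, degree_single]

lemma exists_gt_apply_ne_zero_of_degree_eq [LinearOrder σ] {f g : σ →₀ ℕ}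
    (hdeg : f.degree = g.degree) {i : σ} (hagree : ∀ j < i, f j = g j) (hi : f i < g i) :
    ∃ j, i < j ∧ f j ≠ 0 := by
  by_contra! hzero
  refine (degree_strictMono (lt_def.mpr ⟨fun j => ?_, i, hi⟩)).ne hdeg
  rcases lt_trichotomy j i with hj | rfl | hj
  · exact (hagree j hj).le
  · exact hi.le
  · simp [hzero j hj]

end Finsupp

open Finsupp

lemma monDeg_eq_degree {n : ℕ} (m : Mon n) : monDeg m = m.degree := (degree_eq_sum m).symm

section maxVar

variable {n : ℕ} [NeZero n] {m : Mon n}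

lemma maxVar_eq_max' (h : m.support.Nonempty) : maxVar m = m.support.max' h := by
  rw [maxVar, ← Finset.coe_max' h, WithBot.unbotD_coe]

lemma le_maxVar {j : Fin n} (h : m j ≠ 0) : j ≤ maxVar m := by
  rw [maxVar_eq_max' ⟨j, mem_support_iff.mpr h⟩]
  exact Finset.le_max' _ _ (mem_support_iff.mpr h)

lemma apply_eq_zero_of_maxVar_lt {j : Fin n} (h : maxVar m < j) : m j = 0 := by
  by_contra hj
  exact h.not_ge (le_maxVar hj)

lemma apply_maxVar_ne_zero (h : m ≠ 0) : m (maxVar m) ≠ 0 := by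
  have hne := support_nonempty_iff.mpr h
  rw [maxVar_eq_max' hne]
  exact mem_support_iff.mp (Finset.max'_mem _ hne)

end maxVar

theorem lex_div_maxVar_le_general {n : ℕ} [NeZero n] (d : ℕ)
    (m m' : Mon n) (hm : monDeg m = d) (hm' : monDeg m' = d) (h : toLex m ≤ toLex m') :
    toLex (m - Finsupp.single (maxVar m) 1) ≤ toLex (m' - Finsupp.single (maxVar m') 1) := by
  rcases h.eq_or_lt with heq | hlt
  · rw [toLex.injective heq]
  obtain ⟨i, hagree, hi⟩ := Lex.lt_iff.mp hlt
  simp only [ofLex_toLex] at hagree hi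
  rw [monDeg_eq_degree] at hm hm'
  obtain ⟨k, hik, hk⟩ := exists_gt_apply_ne_zero_of_degree_eq (hm.trans hm'.symm) hagree hi
  have hip : i < maxVar m := hik.trans_le (le_maxVar hk)
  have hiq : i ≤ maxVar m' := le_maxVar (by omega)
  set a := m - single (maxVar m) 1
  set b := m' - single (maxVar m') 1
  have ha : ∀ j ≤ i, a j = m j := fun j hj => by
    simp [a, (hj.trans_lt hip).ne']
  have hab : ∀ j < i, a j = b j := fun j hj => by
    simp [ha j hj.le, b, (hj.trans_le hiq).ne', hagree j hj]
  by_cases hcase : maxVar m' = i ∧ m' i = m i + 1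
  · obtain ⟨hq, hsucc⟩ := hcase
    have hba : b ≤ a := fun j => by
      rcases lt_trichotomy j i with hj | rfl | hj
      · exact (hab j hj).ge
      · simp [b, ha j le_rfl, hq, hsucc]
      · simp [b, apply_eq_zero_of_maxVar_lt (hq ▸ hj : maxVar m' < j)]
    have hdeg : b.degree = a.degree := Nat.add_right_cancel <| by
      rw [degree_tsub_single_add_one (apply_maxVar_ne_zero (by rintro rfl; simp at hi)),
        degree_tsub_single_add_one (apply_maxVar_ne_zero (by rintro rfl; simp at hk)), hm, hm']
    rw [eq_of_le_of_degree_eq hba hdeg]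
  · have hbi : a i < b i := by
      rw [ha i le_rfl]
      simp only [b, tsub_apply, single_apply]
      split_ifs <;> omega
    exact (Lex.lt_iff.mpr ⟨i, hab, hbi⟩).le

/-- If `m ≤_lex m'` are monomials of the same degree `d ≥ 1`, then
`m / x_{max(m)} ≤_lex m' / x_{max(m')}`. -/
theorem lex_div_maxVar_le {n : ℕ} [NeZero n] (hn : 2 ≤ n) (d : ℕ) (hd : 1 ≤ d)
    (m m' : Mon n) (hm : monDeg m = d) (hm' : monDeg m' = d) (h : toLex m ≤ toLex m') :
    toLex (m - Finsupp.single (maxVar m) 1) ≤ toLex (m' - Finsupp.single (maxVar m') 1) :=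
  lex_div_maxVar_le_general d m m' hm hm' h
end

section
/- Let u = x_1^{a_1}···x_n^{a_n} and v = x_q^{b_q}···x_n^{b_n} be monomials of degree d with u ≥_lex v, where q ≥ 2, a_1 > 0 and b_q > 0, and let I = (L(u,v)). If x_n·u/x_1 <_lex v, then x_1 − x_n is a nonzerodivisor on S/I (i.e., the image of x_1 − x_n in S/I is a regular element). -/
open MvPolynomial

/-!
Suppose `p (x₁ - xₙ) ∈ I` but `p ∉ I`, and among the monomials of `p` outside `I` let `m` have the
largest `x₁`-exponent. The coefficient of `x₁ m` in `p (x₁ - xₙ)` shows `x₁ m ∈ I`. Since `x₁`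
divides `u`, hence every generator, at most once (this is what `xₙ u / x₁ <_lex v` gives),
`x₁ ∤ m`, and then the coefficient of `xₙ m` shows `xₙ m ∈ I`. A generator `w` dividing `xₙ m`
but not `m` can be traded for `x_j w / xₙ`, still in `L(u,v)` and dividing `m`, unless
`w = xₙ m`. So both `xₙ m` and `x₁ m` are generators, yet `x₁ m ≤_lex u` forces
`xₙ m ≤_lex xₙ u / x₁ <_lex v`.
-/

theorem Ideal.Quotient.mk_mem_nonZeroDivisors_iff {R : Type*} [CommRing R] {I : Ideal R} {a : R} :
    Ideal.Quotient.mk I a ∈ nonZeroDivisors (R ⧸ I) ↔ ∀ p, p * a ∈ I → p ∈ I := by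
  simp only [mem_nonZeroDivisors_iff_right, Ideal.Quotient.mk_surjective.forall, ← map_mul,
    Ideal.Quotient.eq_zero_iff_mem]

namespace Finsupp

variable {ι : Type*}

theorem apply_eq_add_one_of_le_add_single {w m : ι →₀ ℕ} {i : ι} (hle : w ≤ m + single i 1)
    (hnle : ¬ w ≤ m) : w i = m i + 1 := by
  classical
  obtain ⟨j, hj⟩ : ∃ j, m j < w j := by simpa [le_def] using hnle
  have hwj := le_def.mp hle j
  have hwi := le_def.mp hle i
  rcases eq_or_ne i j with rfl | hij
  · simp only [coe_add, Pi.add_apply, single_eq_same] at hwi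
    omega
  · simp only [coe_add, Pi.add_apply, single_eq_of_ne' hij] at hwj
    omega

theorem exists_add_single_le_of_lt {c m : ι →₀ ℕ} (h : c < m) :
    ∃ j, c j < m j ∧ c + single j 1 ≤ m := by
  classical
  obtain ⟨hle, j, hj⟩ := lt_def.mp h
  refine ⟨j, hj, fun i => ?_⟩
  rcases eq_or_ne j i with rfl | hji
  · simpa using hj
  · simpa [single_eq_of_ne' hji] using hle i

end Finsupp

namespace MvPolynomial

variable {σ R : Type*} [CommRing R] {T : Set (σ →₀ ℕ)} {p : MvPolynomial σ R}

theorem mem_upperClosure_of_coeff_ne_zero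
    (hp : p ∈ Ideal.span ((fun s => monomial s (1 : R)) '' T)) {t : σ →₀ ℕ}
    (ht : coeff t p ≠ 0) : t ∈ upperClosure T :=
  mem_upperClosure.mpr (mem_ideal_span_monomial_image.mp hp t (mem_support_iff.mpr ht))

theorem coeff_add_single_mul_X_sub_X [DecidableEq σ] {i j : σ} (hij : i ≠ j) (m : σ →₀ ℕ) :
    coeff (m + Finsupp.single i 1) (p * (X i - X j)) =
      coeff m p -
        if 0 < m j then coeff (m + Finsupp.single i 1 - Finsupp.single j 1) p else 0 := by
  simp [mul_sub, coeff_mul_X', Finsupp.single_eq_of_ne hij.symm, Nat.pos_iff_ne_zero]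

theorem exists_mem_support_add_single_mem_upperClosure {i j : σ} (hij : i ≠ j)
    (h : p * (X i - X j) ∈ Ideal.span ((fun s => monomial s (1 : R)) '' T))
    (hp : p ∉ Ideal.span ((fun s => monomial s (1 : R)) '' T)) :
    ∃ m ∈ p.support, m ∉ upperClosure T ∧ m + Finsupp.single i 1 ∈ upperClosure T := by
  classical
  obtain ⟨m, hm, hmax⟩ := Finset.exists_max_image {m ∈ p.support | m ∉ upperClosure T} (· i)
    (by simpa [mem_ideal_span_monomial_image, Finset.Nonempty] using hp)
  rw [Finset.mem_filter] at hm
  refine ⟨m, hm.1, hm.2, ?_⟩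
  by_cases hcoeff : coeff (m + Finsupp.single i 1) (p * (X i - X j)) = 0
  · rw [coeff_add_single_mul_X_sub_X hij, sub_eq_zero] at hcoeff
    set t := m + Finsupp.single i 1 - Finsupp.single j 1
    have ht : coeff t p ≠ 0 := by
      split_ifs at hcoeff
      · exact hcoeff ▸ mem_support_iff.mp hm.1
      · exact absurd hcoeff (mem_support_iff.mp hm.1)
    have hti : t i = m i + 1 := by simp [t, Finsupp.single_eq_of_ne hij]
    have htT : t ∈ upperClosure T := by
      by_contra htT
      have := hmax t (by simpa [ht] using htT)
      omega
    exact (upperClosure T).upper tsub_le_self htT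
  · exact mem_upperClosure_of_coeff_ne_zero h hcoeff

theorem add_single_mem_upperClosure_of_apply_eq_zero {i j : σ} (hij : i ≠ j)
    (h : p * (X i - X j) ∈ Ideal.span ((fun s => monomial s (1 : R)) '' T)) {m : σ →₀ ℕ}
    (hm : m ∈ p.support) (hmi : m i = 0) : m + Finsupp.single j 1 ∈ upperClosure T := by
  classical
  refine mem_upperClosure_of_coeff_ne_zero h ?_
  rw [← neg_sub, mul_neg, coeff_neg, coeff_add_single_mul_X_sub_X hij.symm, if_neg hmi.not_gt,
    sub_zero, neg_ne_zero]
  exact mem_support_iff.mp hm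

end MvPolynomial

section LexSegment

open Finsupp

variable {n : ℕ} {d : ℕ} {u v m : Mon n}

theorem monDeg_add_single (a : Mon n) (i : Fin n) : monDeg (a + single i 1) = monDeg a + 1 := by
  simp [monDeg, Finset.sum_add_distrib, single_apply]

theorem eq_of_le_of_monDeg_le {a b : Mon n} (h : a ≤ b) (hd : monDeg b ≤ monDeg a) : a = b := by
  by_contra hne
  obtain ⟨-, i, hi⟩ := lt_def.mp (h.lt_of_ne hne)
  have : monDeg a < monDeg b :=
    Finset.sum_lt_sum (fun j _ => le_def.mp h j) ⟨i, Finset.mem_univ i, hi⟩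
  omega

theorem mem_lexSeg_of_mem_upperClosure (hm : monDeg m = d)
    (h : m ∈ upperClosure (lexSeg d u v)) : m ∈ lexSeg d u v := by
  obtain ⟨w, hw, hwm⟩ := mem_upperClosure.mp h
  rwa [← eq_of_le_of_monDeg_le hwm (by rw [hm, hw.1])]

variable [NeZero n]

theorem apply_zero_le_of_toLex_le {a b : Mon n} (h : toLex a ≤ toLex b) : a 0 ≤ b 0 := by
  by_contra! hlt
  refine h.not_gt (Lex.lt_iff.mpr ⟨0, fun j hj => ?_, hlt⟩)
  exact absurd hj (Fin.not_lt_zero j)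

theorem toLex_lt_of_apply_zero_lt {a b : Mon n} (h : a 0 < b 0) : toLex a < toLex b :=
  Lex.lt_iff.mpr ⟨0, fun j hj => absurd hj (Fin.not_lt_zero j), h⟩

theorem apply_zero_le_one_of_toLex_lt {l : Fin n} (hl : l ≠ 0) (hv : v 0 = 0)
    (h : toLex (u + single l 1 - single 0 1) < toLex v) : u 0 ≤ 1 := by
  have := apply_zero_le_of_toLex_le h.le
  simp only [tsub_apply, Finsupp.add_apply, single_eq_same, single_eq_of_ne' hl, hv] at this
  omega

theorem apply_zero_eq_zero_of_add_single_mem_upperClosure (hu : u 0 ≤ 1)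
    (hm : m ∉ upperClosure (lexSeg d u v)) (h : m + single 0 1 ∈ upperClosure (lexSeg d u v)) :
    m 0 = 0 := by
  obtain ⟨w, hw, hwle⟩ := mem_upperClosure.mp h
  have hw0 := apply_eq_add_one_of_le_add_single hwle
    fun hwm => hm (mem_upperClosure.mpr ⟨w, hw, hwm⟩)
  have := apply_zero_le_of_toLex_le hw.2.2
  omega

theorem add_single_mem_lexSeg_of_mem_upperClosure {l : Fin n} (hl : IsTop l) (hu : 0 < u 0)
    (hm0 : m 0 = 0) (hm : m ∉ upperClosure (lexSeg d u v))
    (h : m + single l 1 ∈ upperClosure (lexSeg d u v)) : m + single l 1 ∈ lexSeg d u v := by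
  obtain ⟨w, hw, hwle⟩ := mem_upperClosure.mp h
  have hwm : ¬ w ≤ m := fun hwm => hm (mem_upperClosure.mpr ⟨w, hw, hwm⟩)
  set c := w - single l 1
  have hcw : c + single l 1 = w :=
    tsub_add_cancel_of_le (single_le_iff.mpr (le_add_self.trans_eq
      (apply_eq_add_one_of_le_add_single hwle hwm).symm))
  have hcm : c ≤ m := by rwa [← add_le_add_iff_right (single l 1), hcw]
  rcases hcm.eq_or_lt with rfl | hcm
  · exact hcw ▸ hw
  obtain ⟨j, hjc, hjm⟩ := exists_add_single_le_of_lt hcm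
  have hj0 : j ≠ 0 := by
    rintro rfl
    omega
  exfalso
  apply hm
  refine mem_upperClosure.mpr ⟨c + single j 1, ⟨?_, ?_, ?_⟩, hjm⟩
  · rw [monDeg_add_single, ← hw.1, ← hcw, monDeg_add_single]
  · calc toLex v ≤ toLex w := hw.2.1
      _ = toLex c + toLex (single l 1) := by rw [← hcw, toLex_add]
      _ ≤ toLex c + toLex (single j 1) := add_le_add_right (Lex.single_le_iff.mpr (hl j)) _
  · refine (toLex_lt_of_apply_zero_lt ?_).le
    have := le_def.mp hcm.le 0
    simp only [Finsupp.add_apply, single_eq_of_ne' hj0]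
    omega

theorem add_single_notMem_lexSeg_of_toLex_lt (hu : 0 < u 0) {l : Fin n}
    (huv : toLex (u + single l 1 - single 0 1) < toLex v) (h0 : m + single 0 1 ∈ lexSeg d u v) :
    m + single l 1 ∉ lexSeg d u v := by
  intro hl
  have hshift : toLex (m + single l 1) + toLex (single 0 1) ≤
      toLex (u + single l 1 - single 0 1) + toLex (single 0 1) := by
    rw [← toLex_add, ← toLex_add, add_right_comm,
      tsub_add_cancel_of_le (le_add_right (single_le_iff.mpr hu))]
    exact add_le_add_left h0.2.2 (toLex (single l 1))
  exact (le_of_add_le_add_right hshift).trans_lt huv |>.not_ge hl.2.1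

end LexSegment

/-- If `x_n · u / x_1 <_lex v`, then `x_1 - x_n` is a nonzerodivisor on `S/I`, where
`I = (L(u,v))`. -/
theorem x1_sub_xn_regular {n : ℕ} [NeZero n] (hn : 2 ≤ n) (k : Type*) [Field k]
    (d : ℕ) (q : ℕ) (hq : 2 ≤ q)
    (u v : Mon n)
    (ha1 : 0 < u 0)
    (hvlow : ∀ i : Fin n, i.val < q - 1 → v i = 0)
    (hcond : toLex (u + Finsupp.single (⟨n - 1, by omega⟩ : Fin n) 1 -
      Finsupp.single 0 1) < toLex v) :
    Ideal.Quotient.mk (monomialIdeal k (lexSeg d u v))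
        (X 0 - X (⟨n - 1, by omega⟩ : Fin n)) ∈
      nonZeroDivisors (MvPolynomial (Fin n) k ⧸ monomialIdeal k (lexSeg d u v)) := by
  set l : Fin n := ⟨n - 1, by omega⟩
  have hl : IsTop l := fun j => Fin.le_def.mpr (by simp only [l]; omega)
  have hl0 : (0 : Fin n) ≠ l := Fin.ne_of_val_ne (by simp only [l, Fin.val_zero]; omega)
  have hu0 : u 0 ≤ 1 :=
    apply_zero_le_one_of_toLex_lt hl0.symm (hvlow 0 (by rw [Fin.val_zero]; omega)) hcond
  rw [Ideal.Quotient.mk_mem_nonZeroDivisors_iff]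
  intro p hp
  by_contra hpI
  obtain ⟨m, hm, hmI, hm0I⟩ := exists_mem_support_add_single_mem_upperClosure hl0 hp hpI
  have hm0 : m 0 = 0 := apply_zero_eq_zero_of_add_single_mem_upperClosure hu0 hmI hm0I
  have hmlL := add_single_mem_lexSeg_of_mem_upperClosure hl ha1 hm0 hmI
    (add_single_mem_upperClosure_of_apply_eq_zero hl0 hp hm hm0)
  have hm0L : m + Finsupp.single 0 1 ∈ lexSeg d u v := mem_lexSeg_of_mem_upperClosure
    (by rw [monDeg_add_single, ← monDeg_add_single m l, hmlL.1]) hm0I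
  exact add_single_notMem_lexSeg_of_toLex_lt ha1 hcond hm0L hmlL
end
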